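/- arXiv:2004.09810 — 4 statements merged into one kernel-verified Lean document; each statement's English description precedes it below -/
import Mathlib

section
/- Any binary periodic sequence s with nonlinear complexity n >= 2 can be generated by the Generalized Prefer-Opposite algorithm: there exist a feedback function f(x_0,...,x_{n-1}) = g(x_1,...,x_{n-1}) not depending on x_0, and an n-stage state u of s whose first n-1 bits appear twice per period of s, such that the GPO algorithm on input (f, u) outputs exactly s. -/
/-- The state map of an `n`-stage FSR with feedback function `f`. -/
def stateMap (n : ℕ) (f : (Fin n → ZMod 2) → ZMod 2) (x : Fin n → ZMod 2) :
    Fin n → ZMod 2 :=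
  fun i => if h : i.val + 1 < n then x ⟨i.val + 1, h⟩ else f x

/-- A feedback function is standard if it does not depend on the coordinate `x_0`. -/
def IsStandard (n : ℕ) (f : (Fin n → ZMod 2) → ZMod 2) : Prop :=
  ∀ x y : Fin n → ZMod 2, (∀ i : Fin n, i.val ≠ 0 → x i = y i) → f x = f y

/-- Shift the state `c` one step to the left, feeding in the new bit `b`. -/
def shiftIn (n : ℕ) (c : Fin n → ZMod 2) (b : ZMod 2) : Fin n → ZMod 2 :=
  fun i => if h : i.val + 1 < n then c ⟨i.val + 1, h⟩ else b

/-- One run of the Generalized Prefer-Opposite algorithm: the pair consists of the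
current state after `t` steps and the list of all states visited so far.  From the
current state `c` the algorithm moves to `(c_1,...,c_{n-1}, 1 + f(c))` if that state
has not appeared before, and to `(c_1,...,c_{n-1}, f(c))` otherwise. -/
def gpoRun (n : ℕ) (f : (Fin n → ZMod 2) → ZMod 2) (u : Fin n → ZMod 2) :
    ℕ → (Fin n → ZMod 2) × List (Fin n → ZMod 2)
  | 0 => (u, [u])
  | t + 1 =>
    let p := gpoRun n f u t
    let cand := shiftIn n p.1 (f p.1 + 1)
    let next := if cand ∈ p.2 then shiftIn n p.1 (f p.1) else cand
    (next, next :: p.2)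

/-- The state of the GPO algorithm after `t` steps. -/
def gpoState (n : ℕ) (f : (Fin n → ZMod 2) → ZMod 2) (u : Fin n → ZMod 2) (t : ℕ) :
    Fin n → ZMod 2 :=
  (gpoRun n f u t).1

/-- The GPO algorithm on input `(f, u)` visits the state `v` (before halting, i.e.
before the first return to the initial state `u`). -/
def gpoVisits (n : ℕ) (f : (Fin n → ZMod 2) → ZMod 2) (u v : Fin n → ZMod 2) : Prop :=
  ∃ t, gpoState n f u t = v ∧ ∀ t', 0 < t' → t' < t → gpoState n f u t' ≠ u

/-- `s` satisfies a feedback (nonlinear) recurrence of order `k`. -/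
def GenBy (s : ℕ → ZMod 2) (k : ℕ) : Prop :=
  ∃ h : (Fin k → ZMod 2) → ZMod 2, ∀ i : ℕ, s (i + k) = h (fun j => s (i + j.val))

section Aux

lemma zmod2_ne_iff (x y : ZMod 2) (h : x ≠ y) : y = x + 1 := by revert x y; decide

lemma zmod2_add_two (x : ZMod 2) : x + 1 + 1 = x := by revert x; decide

/-- The feedback function used in the GPO construction. -/
noncomputable def gpoF (s : ℕ → ZMod 2) (N σ n : ℕ) (c : Fin n → ZMod 2) : ZMod 2 :=
  if h : ∃ t, t < N ∧ ∀ j : Fin n, j.val ≠ 0 → c j = s (σ + t + j.val)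
  then s (σ + Nat.find h + n) + 1 else 0

lemma gpoF_spec (s : ℕ → ZMod 2) (N σ n : ℕ) (c : Fin n → ZMod 2)
    (hex : ∃ t, t < N ∧ ∀ j : Fin n, j.val ≠ 0 → c j = s (σ + t + j.val)) :
    ∃ tm, tm < N ∧ (∀ j : Fin n, j.val ≠ 0 → c j = s (σ + tm + j.val)) ∧
      (∀ t', t' < tm → ¬(t' < N ∧ ∀ j : Fin n, j.val ≠ 0 → c j = s (σ + t' + j.val))) ∧
      gpoF s N σ n c = s (σ + tm + n) + 1 := by
  refine ⟨Nat.find hex, (Nat.find_spec hex).1, (Nat.find_spec hex).2,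
    fun t' h => Nat.find_min hex h, ?_⟩
  unfold gpoF
  rw [dif_pos hex]

lemma gpoF_standard (s : ℕ → ZMod 2) (N σ n : ℕ) : IsStandard n (gpoF s N σ n) := by
  intro x y hxy
  unfold gpoF
  by_cases hx : ∃ t, t < N ∧ ∀ j : Fin n, j.val ≠ 0 → x j = s (σ + t + j.val)
  · have hy : ∃ t, t < N ∧ ∀ j : Fin n, j.val ≠ 0 → y j = s (σ + t + j.val) := by
      obtain ⟨t, ht1, ht2⟩ := hx
      exact ⟨t, ht1, fun j hj => by rw [← hxy j hj]; exact ht2 j hj⟩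
    rw [dif_pos hx, dif_pos hy]
    have h1 : Nat.find hx ≤ Nat.find hy := by
      apply Nat.find_min' hx
      obtain ⟨ht1, ht2⟩ := Nat.find_spec hy
      exact ⟨ht1, fun j hj => by rw [hxy j hj]; exact ht2 j hj⟩
    have h2 : Nat.find hy ≤ Nat.find hx := by
      apply Nat.find_min' hy
      obtain ⟨ht1, ht2⟩ := Nat.find_spec hx
      exact ⟨ht1, fun j hj => by rw [← hxy j hj]; exact ht2 j hj⟩
    rw [Nat.le_antisymm h1 h2]
  · have hy : ¬ ∃ t, t < N ∧ ∀ j : Fin n, j.val ≠ 0 → y j = s (σ + t + j.val) := by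
      intro ⟨t, ht1, ht2⟩
      exact hx ⟨t, ht1, fun j hj => by rw [hxy j hj]; exact ht2 j hj⟩
    rw [dif_neg hx, dif_neg hy]

lemma gpoRun_mem (n : ℕ) (f : (Fin n → ZMod 2) → ZMod 2) (u v : Fin n → ZMod 2) (t : ℕ) :
    v ∈ (gpoRun n f u t).2 ↔ ∃ i, i ≤ t ∧ gpoState n f u i = v := by
  induction t with
  | zero =>
    constructor
    · intro h
      have : v = u := by simpa [gpoRun] using h
      exact ⟨0, le_refl _, this.symm⟩
    · rintro ⟨i, hi, hs⟩
      interval_cases i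
      simpa [gpoRun, gpoState] using hs.symm
  | succ t ih =>
    have hrun : (gpoRun n f u (t+1)).2 = (gpoRun n f u (t+1)).1 :: (gpoRun n f u t).2 := rfl
    rw [hrun, List.mem_cons]
    constructor
    · rintro (h | h)
      · exact ⟨t+1, le_refl _, h.symm⟩
      · obtain ⟨i, hi, hs⟩ := ih.mp h
        exact ⟨i, by omega, hs⟩
    · rintro ⟨i, hi, hs⟩
      rcases Nat.lt_or_ge i (t+1) with h' | h'
      · exact Or.inr (ih.mpr ⟨i, by omega, hs⟩)
      · have : i = t + 1 := by omega
        subst this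
        exact Or.inl hs.symm

lemma gpoStep (n : ℕ) (f : (Fin n → ZMod 2) → ZMod 2) (u : Fin n → ZMod 2) (t : ℕ) :
    gpoState n f u (t+1) =
      (if shiftIn n (gpoState n f u t) (f (gpoState n f u t) + 1) ∈ (gpoRun n f u t).2
       then shiftIn n (gpoState n f u t) (f (gpoState n f u t))
       else shiftIn n (gpoState n f u t) (f (gpoState n f u t) + 1)) := rfl

lemma shiftIn_eq_win (n : ℕ) (s : ℕ → ZMod 2) (c : Fin n → ZMod 2) (p : ℕ) (hn : 0 < n)
    (htail : ∀ j : Fin n, j.val ≠ 0 → c j = s (p + j.val)) :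
    shiftIn n c (s (p + n)) = fun i : Fin n => s (p + 1 + i.val) := by
  funext i
  unfold shiftIn
  split
  · next h =>
    rw [htail ⟨i.val + 1, h⟩ (by simp)]
    congr 1
    simp only [Fin.val_mk]
    omega
  · next h =>
    have hi := i.isLt
    congr 1
    omega

end Aux
/-- Any binary periodic sequence `s` with nonlinear complexity `n ≥ 2` can
be generated by the GPO Algorithm: there exist a standard feedback function `f` and a
starting position `σ` in a period of `s` — so that the initial state
`u = (s σ, ..., s (σ+n-1))` is an `n`-stage state of `s` whose first `n-1` bits appear
twice per period — such that the states of the GPO algorithm on input `(f,u)` are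
exactly the successive `n`-windows of `s`, returning to `u` after one full period `N`. -/
theorem gpo_generates_any_periodic (n : ℕ) (hn : 2 ≤ n) (s : ℕ → ZMod 2) (N : ℕ)
    (hN : 0 < N) (hper : ∀ i, s (i + N) = s i)
    (hleast : ∀ M, 0 < M → (∀ i, s (i + M) = s i) → N ≤ M)
    (hnlc : IsLeast {k | GenBy s k} n) :
    ∃ (f : (Fin n → ZMod 2) → ZMod 2) (σ : ℕ), IsStandard n f ∧ σ < N ∧
      (∃ i₁ i₂, i₁ < N ∧ i₂ < N ∧ i₁ ≠ i₂ ∧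
        ∀ j, j < n - 1 → s (i₁ + j) = s (σ + j) ∧ s (i₂ + j) = s (σ + j)) ∧
      (∀ t, t ≤ N →
        gpoState n f (fun j : Fin n => s (σ + j.val)) t = fun j : Fin n => s (σ + t + j.val)) := by
  have hn0 : 0 < n := by omega
  -- periodicity tools
  have hperk : ∀ k x, s (x + k * N) = s x := by
    intro k
    induction k with
    | zero => intro x; simp
    | succ k ih =>
      intro x
      have h1 : x + (k + 1) * N = (x + k * N) + N := by ring
      rw [h1, hper, ih]
  have hcongr : ∀ a b : ℕ, a % N = b % N → s a = s b := by
    intro a b h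
    have ha := hperk (a / N) (a % N)
    have hb := hperk (b / N) (b % N)
    rw [Nat.mod_add_div'] at ha hb
    rw [ha, hb, h]
  obtain ⟨hfun, hrec⟩ := hnlc.1
  have hprop : ∀ p d, (∀ j, j < n → s (p + j) = s (p + d + j)) →
      ∀ i, s (p + i) = s (p + d + i) := by
    intro p d hpd i
    induction i using Nat.strong_induction_on with
    | _ i ih =>
      by_cases hi : i < n
      · exact hpd i hi
      · have h1 : p + i = (p + (i - n)) + n := by omega
        have h2 : p + d + i = (p + d + (i - n)) + n := by omega
        rw [h1, h2, hrec (p + (i - n)), hrec (p + d + (i - n))]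
        congr 1
        funext j
        have hj := j.isLt
        have h3 : p + (i - n) + j.val = p + (i - n + j.val) := by omega
        have h4 : p + d + (i - n) + j.val = p + d + (i - n + j.val) := by omega
        rw [h3, h4]
        exact ih (i - n + j.val) (by omega)
  have hL2 : ∀ p d, 0 < d → (∀ j, j < n → s (p + j) = s (p + d + j)) → N ≤ d := by
    intro p d hd hpd
    apply hleast d hd
    intro m
    have hple : p ≤ p * N := by
      calc p = p * 1 := by ring
        _ ≤ p * N := Nat.mul_le_mul_left p hN
    have hpr : p + (m + p * N - p) = m + p * N := by omega
    have h1 := hprop p d hpd (m + p * N - p)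
    have h2 : p + d + (m + p * N - p) = m + d + p * N := by omega
    rw [hpr, h2] at h1
    calc s (m + d) = s (m + d + p * N) := (hperk p (m + d)).symm
      _ = s (m + p * N) := h1.symm
      _ = s m := hperk p m
  have hdistinct : ∀ p q, (∀ j, j < n → s (p + j) = s (q + j)) → p < q → q - p < N → False := by
    intro p q hpq hlt hsm
    have := hL2 p (q - p) (by omega) (fun j hj => by
      have h1 : p + (q - p) + j = q + j := by omega
      rw [h1]; exact hpq j hj)
    omega
  -- a conflict pair exists since nonlinear complexity is exactly n
  have hconf : ∃ a b : ℕ, (∀ j, j < n - 1 → s (a + j) = s (b + j)) ∧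
      s (a + (n - 1)) ≠ s (b + (n - 1)) := by
    by_contra hno
    push_neg at hno
    have hgb : GenBy s (n - 1) := by
      classical
      refine ⟨fun w => if hw : ∃ a, ∀ j : Fin (n - 1), s (a + j.val) = w j
        then s (hw.choose + (n - 1)) else 0, ?_⟩
      intro i
      have hw : ∃ a, ∀ j : Fin (n - 1), s (a + j.val) = s (i + j.val) := ⟨i, fun j => rfl⟩
      show s (i + (n - 1)) = if hw2 : ∃ a, ∀ j : Fin (n - 1), s (a + j.val) = s (i + j.val)
        then s (hw2.choose + (n - 1)) else 0
      rw [dif_pos hw]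
      exact (hno hw.choose i (fun j hj => hw.choose_spec ⟨j, hj⟩)).symm
    have := hnlc.2 hgb
    omega
  obtain ⟨a, b, hpre, hlast⟩ := hconf
  have hσN : a % N < N := Nat.mod_lt _ hN
  have hβN : b % N < N := Nat.mod_lt _ hN
  have hsa : ∀ j, s (a % N + j) = s (a + j) :=
    fun j => hcongr _ _ ((Nat.mod_modEq a N).add_right j)
  have hsb : ∀ j, s (b % N + j) = s (b + j) :=
    fun j => hcongr _ _ ((Nat.mod_modEq b N).add_right j)
  have hαβ : a % N ≠ b % N := by
    intro h
    apply hlast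
    rw [← hsa (n - 1), h, hsb (n - 1)]
  refine ⟨gpoF s N (a % N) n, a % N, gpoF_standard s N (a % N) n, hσN,
    ⟨a % N, b % N, hσN, hβN, hαβ,
      fun j hj => ⟨rfl, by rw [hsb j, ← hpre j hj, ← hsa j]⟩⟩, ?_⟩
  intro t
  induction t using Nat.strong_induction_on with
  | _ t ih =>
    cases t with
    | zero =>
      intro _
      funext j
      show s (a % N + j.val) = s (a % N + 0 + j.val)
      rw [Nat.add_zero]
    | succ k =>
      intro hkN
      have hk : k < N := by omega
      have hc : gpoState n (gpoF s N (a % N) n) (fun j : Fin n => s (a % N + j.val)) k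
          = fun j : Fin n => s (a % N + k + j.val) := ih k (by omega) (by omega)
      have hex : ∃ t', t' < N ∧ ∀ j : Fin n, (j : ℕ) ≠ 0 →
          (fun j : Fin n => s (a % N + k + j.val)) j = s (a % N + t' + j.val) :=
        ⟨k, hk, fun j _ => rfl⟩
      obtain ⟨tm, htmN, htm, htmmin, hfc⟩ :=
        gpoF_spec s N (a % N) n (fun j : Fin n => s (a % N + k + j.val)) hex
      have htmk : tm ≤ k := by
        by_contra h
        exact htmmin k (by omega) ⟨hk, fun j _ => rfl⟩
      have hstep := gpoStep n (gpoF s N (a % N) n) (fun j : Fin n => s (a % N + j.val)) k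
      rw [hc] at hstep
      rcases Nat.lt_or_ge tm k with htmlt | htmge
      · -- Case B : second occurrence, candidate already visited
        have htm' : ∀ j : Fin n, (j : ℕ) ≠ 0 →
            s (a % N + k + j.val) = s (a % N + tm + j.val) := fun j hj => htm j hj
        have hdiffbit : s (a % N + tm + n) ≠ s (a % N + k + n) := by
          intro heq
          refine hdistinct (a % N + tm + 1) (a % N + k + 1) ?_ (by omega) (by omega)
          intro j hj
          rcases Nat.lt_or_ge (j + 1) n with hj1 | hj1
          · have h5 := htm' ⟨j + 1, hj1⟩ (by simp)
            have e1 : a % N + k + ((⟨j + 1, hj1⟩ : Fin n) : ℕ) = a % N + k + 1 + j := by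
              simp only [Fin.val_mk]; omega
            have e2 : a % N + tm + ((⟨j + 1, hj1⟩ : Fin n) : ℕ) = a % N + tm + 1 + j := by
              simp only [Fin.val_mk]; omega
            rw [e1, e2] at h5
            exact h5.symm
          · have hjn : j = n - 1 := by omega
            subst hjn
            have e1 : a % N + tm + 1 + (n - 1) = a % N + tm + n := by omega
            have e2 : a % N + k + 1 + (n - 1) = a % N + k + n := by omega
            rw [e1, e2]
            exact heq
        have hbit : s (a % N + k + n) = s (a % N + tm + n) + 1 := zmod2_ne_iff _ _ hdiffbit
        have hfc1 : gpoF s N (a % N) n (fun j : Fin n => s (a % N + k + j.val)) + 1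
            = s (a % N + tm + n) := by rw [hfc, zmod2_add_two]
        have hcand : shiftIn n (fun j : Fin n => s (a % N + k + j.val)) (s (a % N + tm + n))
            = fun i : Fin n => s (a % N + tm + 1 + i.val) :=
          shiftIn_eq_win n s _ (a % N + tm) hn0 (fun j hj => htm' j hj)
        have hmem : shiftIn n (fun j : Fin n => s (a % N + k + j.val))
            (gpoF s N (a % N) n (fun j : Fin n => s (a % N + k + j.val)) + 1)
            ∈ (gpoRun n (gpoF s N (a % N) n) (fun j : Fin n => s (a % N + j.val)) k).2 := by
          rw [hfc1, hcand, gpoRun_mem]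
          exact ⟨tm + 1, by omega, ih (tm + 1) (by omega) (by omega)⟩
        rw [hstep, if_pos hmem, hfc, ← hbit]
        have hW := shiftIn_eq_win n s (fun j : Fin n => s (a % N + k + j.val)) (a % N + k) hn0
          (fun j _ => rfl)
        rw [hW]
        rfl
      · -- Case A : first occurrence, candidate not yet visited
        have htmk' : tm = k := by omega
        rw [htmk'] at hfc htmmin
        have hk1 : k + 1 < N := by
          rcases Nat.lt_or_ge (k + 1) N with h | h
          · exact h
          · exfalso
            have hkN1 : k = N - 1 := by omega
            set X := b % N + (N - a % N) + (N - 1) with hX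
            have ht2N : X % N < N := Nat.mod_lt _ hN
            have hPt2 : X % N < N ∧ ∀ j : Fin n, (j : ℕ) ≠ 0 →
                (fun j : Fin n => s (a % N + k + j.val)) j = s (a % N + X % N + j.val) := by
              refine ⟨ht2N, fun j hj => ?_⟩
              have hjn := j.isLt
              show s (a % N + k + j.val) = s (a % N + X % N + j.val)
              have e1 : a % N + k + j.val = (a % N + (j.val - 1)) + N := by omega
              rw [e1, hper]
              have e2 : s (a % N + (j.val - 1)) = s (b % N + (j.val - 1)) := by
                rw [hsa, hsb]
                exact hpre (j.val - 1) (by omega)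
              rw [e2]
              apply hcongr
              have hmod : a % N + X % N + j.val ≡ b % N + (j.val - 1) [MOD N] := by
                calc a % N + X % N + j.val
                    ≡ a % N + X + j.val [MOD N] :=
                      ((Nat.mod_modEq X N).add_left (a % N)).add_right j.val
                  _ = (b % N + (j.val - 1)) + 2 * N := by omega
                  _ ≡ b % N + (j.val - 1) [MOD N] := by
                      simpa using (Nat.ModEq.refl (b % N + (j.val - 1))).add
                        (Nat.modEq_zero_iff_dvd.mpr ⟨2, by ring⟩)
              exact hmod.symm
            have hne : X % N ≠ N - 1 := by
              intro hEq
              apply hαβ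
              have hXX : X ≡ (N - 1) [MOD N] := by
                show X % N = (N - 1) % N
                rw [hEq, Nat.mod_eq_of_lt (by omega)]
              have h2 : a % N + X + 1 ≡ a % N + (N - 1) + 1 [MOD N] :=
                (hXX.add_left (a % N)).add_right 1
              have h3 : a % N + X + 1 = b % N + 2 * N := by omega
              have h4 : a % N + (N - 1) + 1 = a % N + N := by omega
              rw [h3, h4] at h2
              have h5 : b % N + 2 * N ≡ b % N [MOD N] := by
                simpa using (Nat.ModEq.refl (b % N)).add
                  (Nat.modEq_zero_iff_dvd.mpr ⟨2, by ring⟩)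
              have h6 : a % N + N ≡ a % N [MOD N] := by
                simpa using (Nat.ModEq.refl (a % N)).add
                  (Nat.modEq_zero_iff_dvd.mpr ⟨1, by ring⟩)
              have h7 : a % N ≡ b % N [MOD N] := (h6.symm.trans h2.symm).trans h5
              have h8 : a % N % N = b % N % N := h7
              rwa [Nat.mod_eq_of_lt hσN, Nat.mod_eq_of_lt hβN] at h8
            exact htmmin (X % N) (by omega) hPt2
        have hfc1 : gpoF s N (a % N) n (fun j : Fin n => s (a % N + k + j.val)) + 1
            = s (a % N + k + n) := by rw [hfc, zmod2_add_two]
        have hcand : shiftIn n (fun j : Fin n => s (a % N + k + j.val)) (s (a % N + k + n))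
            = fun i : Fin n => s (a % N + k + 1 + i.val) :=
          shiftIn_eq_win n s _ (a % N + k) hn0 (fun j _ => rfl)
        have hnmem : shiftIn n (fun j : Fin n => s (a % N + k + j.val))
            (gpoF s N (a % N) n (fun j : Fin n => s (a % N + k + j.val)) + 1)
            ∉ (gpoRun n (gpoF s N (a % N) n) (fun j : Fin n => s (a % N + j.val)) k).2 := by
          rw [hfc1, hcand, gpoRun_mem]
          rintro ⟨i, hik, hsi⟩
          have hwi := ih i (by omega) (by omega)
          rw [hwi] at hsi
          refine hdistinct (a % N + i) (a % N + k + 1) ?_ (by omega) (by omega)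
          intro j hj
          have h9 := congrFun hsi ⟨j, hj⟩
          simpa using h9
        rw [hstep, if_neg hnmem, hfc1, hcand]
        rfl
end

section
/- Let f(x_0,...,x_{n-1}) = g(x_1,...,x_{n-1}) be standard. The GPO algorithm on input (f, u) terminates (i.e., produces a periodic sequence by returning to the initial state u) if and only if u is not a leaf of the state graph G_f. -/
-- auxiliary lemmas
lemma stateMap_eq_shiftIn (n : ℕ) (f : (Fin n → ZMod 2) → ZMod 2) (c : Fin n → ZMod 2) :
    stateMap n f c = shiftIn n c (f c) := rfl

lemma shiftIn_last {n : ℕ} (hn : 1 ≤ n) (c : Fin n → ZMod 2) (b : ZMod 2) :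
    shiftIn n c b ⟨n - 1, by omega⟩ = b := by
  unfold shiftIn
  rw [dif_neg (by simp; omega)]

lemma last_eq {n : ℕ} (hn : 1 ≤ n) {c c' : Fin n → ZMod 2} {b b' : ZMod 2}
    {v : Fin n → ZMod 2} (h : shiftIn n c b = v) (h' : shiftIn n c' b' = v) : b = b' := by
  have h1 := congrFun h ⟨n - 1, by omega⟩
  have h2 := congrFun h' ⟨n - 1, by omega⟩
  rw [shiftIn_last hn] at h1 h2
  rw [h1, h2]

lemma agree_off_zero {n : ℕ} {c c' : Fin n → ZMod 2} {b b' : ZMod 2}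
    {v : Fin n → ZMod 2} (h : shiftIn n c b = v) (h' : shiftIn n c' b' = v) :
    ∀ i : Fin n, i.val ≠ 0 → c i = c' i := by
  intro i hi
  have hlt : i.val - 1 < n := by omega
  have key : ∀ (d : Fin n → ZMod 2) (e : ZMod 2), shiftIn n d e = v →
      d i = v ⟨i.val - 1, hlt⟩ := by
    intro d e hd
    have h2 := congrFun hd ⟨i.val - 1, hlt⟩
    unfold shiftIn at h2
    rw [dif_pos (by simp; omega)] at h2
    have hi' : (⟨i.val - 1 + 1, by omega⟩ : Fin n) = i := Fin.ext (by simp; omega)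
    rwa [hi'] at h2
  rw [key c b h, key c' b' h']

lemma gpoState_zero (n : ℕ) (f : (Fin n → ZMod 2) → ZMod 2) (u : Fin n → ZMod 2) :
    gpoState n f u 0 = u := rfl

lemma mem_gpoRun_snd (n : ℕ) (f : (Fin n → ZMod 2) → ZMod 2) (u : Fin n → ZMod 2) :
    ∀ t (v : Fin n → ZMod 2),
      (v ∈ (gpoRun n f u t).2 ↔ ∃ s, s ≤ t ∧ gpoState n f u s = v) := by
  intro t
  induction t with
  | zero =>
    intro v
    show v ∈ [u] ↔ _
    simp only [List.mem_singleton]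
    constructor
    · rintro rfl; exact ⟨0, le_refl 0, rfl⟩
    · rintro ⟨s, hs, hv⟩
      have : s = 0 := Nat.le_zero.mp hs
      subst this; exact hv.symm
  | succ t ih =>
    intro v
    have hsnd : (gpoRun n f u (t + 1)).2 = gpoState n f u (t + 1) :: (gpoRun n f u t).2 := rfl
    rw [hsnd, List.mem_cons, ih v]
    constructor
    · rintro (rfl | ⟨s, hs, hv⟩)
      · exact ⟨t + 1, le_refl _, rfl⟩
      · exact ⟨s, by omega, hv⟩
    · rintro ⟨s, hs, hv⟩
      rcases Nat.lt_or_ge s (t + 1) with h | h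
      · exact Or.inr ⟨s, by omega, hv⟩
      · have : s = t + 1 := by omega
        subst this; exact Or.inl hv.symm

lemma gpo_step (n : ℕ) (f : (Fin n → ZMod 2) → ZMod 2) (u : Fin n → ZMod 2) (t : ℕ) :
    (shiftIn n (gpoState n f u t) (f (gpoState n f u t) + 1) ∈ (gpoRun n f u t).2 ∧
       gpoState n f u (t + 1) = shiftIn n (gpoState n f u t) (f (gpoState n f u t))) ∨
    (shiftIn n (gpoState n f u t) (f (gpoState n f u t) + 1) ∉ (gpoRun n f u t).2 ∧
       gpoState n f u (t + 1) = shiftIn n (gpoState n f u t) (f (gpoState n f u t) + 1)) := by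
  by_cases hmem : shiftIn n (gpoState n f u t) (f (gpoState n f u t) + 1) ∈ (gpoRun n f u t).2
  · left
    refine ⟨hmem, ?_⟩
    show (gpoRun n f u (t + 1)).1 = _
    simp only [gpoRun, show (gpoRun n f u t).1 = gpoState n f u t from rfl]
    rw [if_pos hmem]
  · right
    refine ⟨hmem, ?_⟩
    show (gpoRun n f u (t + 1)).1 = _
    simp only [gpoRun, show (gpoRun n f u t).1 = gpoState n f u t from rfl]
    rw [if_neg hmem]

lemma zmod2_cases : ∀ a b c : ZMod 2, a ≠ b → c = a ∨ c = b := by decide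

lemma zmod2_succ_ne : ∀ a : ZMod 2, a + 1 ≠ a := by decide

lemma eq_of_agree_zero {n : ℕ} (hn : 1 ≤ n) {c c' : Fin n → ZMod 2}
    (h : ∀ i : Fin n, i.val ≠ 0 → c i = c' i)
    (h0 : c ⟨0, by omega⟩ = c' ⟨0, by omega⟩) : c = c' := by
  funext i
  by_cases hi : i.val = 0
  · have hii : i = (⟨0, by omega⟩ : Fin n) := Fin.ext hi
    rw [hii]; exact h0
  · exact h i hi

/-- For a standard feedback function `f`, the GPO algorithm on input
`(f, u)` terminates (returns to the initial state `u`, producing a periodic sequence)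
if and only if `u` is not a leaf of the state graph `G_f`. -/
theorem gpo_terminates_iff_not_leaf (n : ℕ) (hn : 1 ≤ n)
    (f : (Fin n → ZMod 2) → ZMod 2) (hf : IsStandard n f) (u : Fin n → ZMod 2) :
    (∃ T, 0 < T ∧ gpoState n f u T = u) ↔ (∃ v, stateMap n f v = u) := by
  constructor
  · rintro ⟨T, hT, hTu⟩
    obtain ⟨t, rfl⟩ : ∃ t, T = t + 1 := ⟨T - 1, by omega⟩
    rcases gpo_step n f u t with ⟨hmem, hstep⟩ | ⟨hmem, hstep⟩
    · exact ⟨gpoState n f u t, by rw [stateMap_eq_shiftIn, ← hstep]; exact hTu⟩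
    · exact absurd ((mem_gpoRun_snd n f u t _).mpr
        ⟨0, Nat.zero_le t, (gpoState_zero n f u).trans (hTu.symm.trans hstep)⟩) hmem
  · rintro ⟨v, hv⟩
    rw [stateMap_eq_shiftIn] at hv
    by_contra hno
    push_neg at hno
    classical
    -- pigeonhole: some state repeats
    have hex : ∃ t2, ∃ s, s < t2 ∧ gpoState n f u s = gpoState n f u t2 := by
      obtain ⟨a, b, hab, heq⟩ :=
        Finite.exists_ne_map_eq_of_infinite (fun t : ℕ => gpoState n f u t)
      rcases Nat.lt_or_ge a b with h | h
      · exact ⟨b, a, h, heq⟩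
      · exact ⟨a, b, by omega, heq.symm⟩
    obtain ⟨t1, ht1lt, ht1eq⟩ := Nat.find_spec hex
    have hmin : ∀ s t, s < t → t < Nat.find hex →
        gpoState n f u s ≠ gpoState n f u t :=
      fun s t hst ht heq => Nat.find_min hex ht ⟨s, hst, heq⟩
    obtain ⟨k, hk⟩ : ∃ k, Nat.find hex = k + 1 := ⟨Nat.find hex - 1, by omega⟩
    rw [hk] at ht1lt ht1eq hmin
    -- t1 ≥ 1, since x t1 = x (k+1) ≠ u = x 0
    have ht1pos : 0 < t1 := by
      rcases Nat.eq_zero_or_pos t1 with rfl | h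
      · exact absurd (ht1eq.symm.trans (gpoState_zero n f u)) (hno (k + 1) (by omega))
      · exact h
    obtain ⟨m, rfl⟩ : ∃ m, t1 = m + 1 := ⟨t1 - 1, by omega⟩
    have hmk : m < k := by omega
    -- the entry at time k+1 must be via the forced branch
    have hw2 : shiftIn n (gpoState n f u k) (f (gpoState n f u k)) = gpoState n f u (k + 1) := by
      rcases gpo_step n f u k with ⟨_, h⟩ | ⟨hmem, h⟩
      · exact h.symm
      · exact absurd ((mem_gpoRun_snd n f u k _).mpr
          ⟨m + 1, by omega, ht1eq.trans h⟩) hmem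
    have hcc : gpoState n f u m ≠ gpoState n f u k := hmin m k hmk (by omega)
    -- the entry at time m+1 must also be via the forced branch
    have hstep1 : (shiftIn n (gpoState n f u m) (f (gpoState n f u m) + 1) ∈ (gpoRun n f u m).2
        ∧ shiftIn n (gpoState n f u m) (f (gpoState n f u m)) = gpoState n f u (k + 1)) := by
      rcases gpo_step n f u m with ⟨hmem, h⟩ | ⟨hmem, h⟩
      · exact ⟨hmem, h.symm.trans ht1eq⟩
      · -- cand branch: contradiction with standardness and last bits
        exfalso
        have h1 : shiftIn n (gpoState n f u m) (f (gpoState n f u m) + 1) = gpoState n f u (k + 1) :=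
          h.symm.trans ht1eq
        have hfeq : f (gpoState n f u m) = f (gpoState n f u k) :=
          hf _ _ (agree_off_zero h1 hw2)
        have hlast : f (gpoState n f u m) + 1 = f (gpoState n f u k) := last_eq hn h1 hw2
        rw [← hfeq] at hlast
        exact zmod2_succ_ne _ hlast
    obtain ⟨hmem1, hw1⟩ := hstep1
    -- the candidate at time m was visited earlier: at time s ≤ m
    obtain ⟨s, hs, hsx⟩ := (mem_gpoRun_snd n f u m _).mp hmem1
    rcases Nat.eq_zero_or_pos s with rfl | hspos
    · -- the candidate is u itself; contradicts u having a predecessor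
      have hLu : shiftIn n (gpoState n f u m) (f (gpoState n f u m) + 1) = u :=
        hsx.symm.trans (gpoState_zero n f u)
      have hfeq : f (gpoState n f u m) = f v := hf _ _ (agree_off_zero hLu hv)
      have hlast : f (gpoState n f u m) + 1 = f v := last_eq hn hLu hv
      rw [← hfeq] at hlast
      exact zmod2_succ_ne _ hlast
    · obtain ⟨j, rfl⟩ : ∃ j, s = j + 1 := ⟨s - 1, by omega⟩
      -- the state entered at time j+1 is the candidate L
      have hL0 : (shiftIn n (gpoState n f u j) (f (gpoState n f u j)) =
            shiftIn n (gpoState n f u m) (f (gpoState n f u m) + 1)) ∨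
          (shiftIn n (gpoState n f u j) (f (gpoState n f u j) + 1) =
            shiftIn n (gpoState n f u m) (f (gpoState n f u m) + 1)) := by
        rcases gpo_step n f u j with ⟨_, h⟩ | ⟨_, h⟩
        · exact Or.inl (h.symm.trans hsx)
        · exact Or.inr (h.symm.trans hsx)
      -- in either case, x j agrees with x m off coordinate 0
      have agree01 : ∀ i : Fin n, i.val ≠ 0 → gpoState n f u j i = gpoState n f u m i := by
        rcases hL0 with h | h
        · exact agree_off_zero h rfl
        · exact agree_off_zero h rfl
      have agree12 : ∀ i : Fin n, i.val ≠ 0 → gpoState n f u m i = gpoState n f u k i :=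
        agree_off_zero hw1 hw2
      have h0ne : gpoState n f u m ⟨0, by omega⟩ ≠ gpoState n f u k ⟨0, by omega⟩ := by
        intro h0
        exact hcc (eq_of_agree_zero hn agree12 h0)
      rcases zmod2_cases (gpoState n f u m ⟨0, by omega⟩) (gpoState n f u k ⟨0, by omega⟩)
          (gpoState n f u j ⟨0, by omega⟩) h0ne with h0 | h0
      · -- x j = x m : earlier repeat, contradiction with minimality
        exact hmin j m (by omega) (by omega) (eq_of_agree_zero hn agree01 h0)
      · -- x j = x k : earlier repeat, contradiction with minimality
        exact hmin j k (by omega) (by omega)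
          (eq_of_agree_zero hn (fun i hi => (agree01 i hi).trans (agree12 i hi)) h0)
end

section
/- Let 0 < k < l < n and f(x_0,...,x_{n-1}) = x_1·x_2···x_{n-1} + x_k·x_l. The functional graph of the state map of f on F_2^n has a unique cycle, namely the loop at the all-zero state, if and only if gcd(n-k, l-k) = 1. -/
namespace FSRaux

def pulse (d t : ℕ) : ZMod 2 := if d ∣ t then 1 else 0

lemma pulse_one {d t : ℕ} (h : d ∣ t) : pulse d t = 1 := if_pos h
lemma pulse_zero {d t : ℕ} (h : ¬ d ∣ t) : pulse d t = 0 := if_neg h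

lemma iter_zero {n : ℕ} (f : (Fin n → ZMod 2) → ZMod 2) (hn : 0 < n) :
    ∀ (j : ℕ) (h : j < n) (y : Fin n → ZMod 2),
      (stateMap n f)^[j] y ⟨0, hn⟩ = y ⟨j, h⟩
  | 0, _, _ => rfl
  | j+1, h, y => by
    have hj : j < n := Nat.lt_of_succ_lt h
    rw [Function.iterate_succ_apply, iter_zero f hn j hj]
    show (if h' : j + 1 < n then y ⟨j + 1, h'⟩ else f y) = y ⟨j + 1, h⟩
    rw [dif_pos h]

lemma iter_window {n : ℕ} (f : (Fin n → ZMod 2) → ZMod 2) (hn : 0 < n)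
    (x : Fin n → ZMod 2) (t : ℕ) (i : Fin n) :
    (stateMap n f)^[t] x i = (stateMap n f)^[t + i.val] x ⟨0, hn⟩ := by
  rw [add_comm t i.val, Function.iterate_add_apply, iter_zero f hn i.val i.isLt]

lemma stateMap_last {n : ℕ} (f : (Fin n → ZMod 2) → ZMod 2) (y : Fin n → ZMod 2)
    (h : n - 1 < n) (hn : ¬ (n - 1 + 1 < n)) :
    stateMap n f y ⟨n - 1, h⟩ = f y := dif_neg hn

lemma rep_lemma {A B M : ℕ} (hB : 0 < B) (hco : Nat.gcd A B = 1) (hM : A * B ≤ M) :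
    ∃ x y, M = x * A + y * B := by
  rcases eq_or_ne B 1 with h1 | h1
  · exact ⟨0, M, by simp [h1]⟩
  · have hA : 0 < A := by
      rcases Nat.eq_zero_or_pos A with h | h
      · subst h; rw [Nat.gcd_zero_left] at hco; omega
      · exact h
    obtain ⟨x0, -, hx0⟩ := Nat.exists_mul_mod_eq_one_of_coprime hco (by omega)
    set x := (x0 * M) % B with hx
    have hxB : x < B := Nat.mod_lt _ (by omega)
    have h4 : A * x ≡ M [MOD B] := by
      calc A * x ≡ A * (x0 * M) [MOD B] := Nat.ModEq.mul_left A (Nat.mod_modEq _ _)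
        _ = (A * x0) * M := by ring
        _ ≡ 1 * M [MOD B] := Nat.ModEq.mul_right M (by
            show (A * x0) % B = 1 % B
            rw [hx0, Nat.mod_eq_of_lt (by omega)])
        _ = M := by ring
    have hle : A * x ≤ M := le_trans (Nat.mul_le_mul (le_refl A) hxB.le) hM
    obtain ⟨y, hy⟩ := (Nat.modEq_iff_dvd' hle).mp h4
    refine ⟨x, y, ?_⟩
    have : M = B * y + A * x := (Nat.sub_eq_iff_eq_add hle).mp hy
    rw [this]; ring

lemma all_one {A B p : ℕ} (u : ℕ → ZMod 2) (hp : 0 < p)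
    (hB : 0 < B) (hco : Nat.gcd A B = 1)
    (hper : ∀ m t, u (t + m * p) = u t)
    (hSA : ∀ s, u (s + A) = 1 → u s = 1)
    (hSB : ∀ s, u (s + B) = 1 → u s = 1)
    {T : ℕ} (hT : u T = 1) (t : ℕ) : u t = 1 := by
  have hdescA : ∀ (a s : ℕ), u (s + a * A) = 1 → u s = 1 := by
    intro a
    induction a with
    | zero => intro s h; simpa using h
    | succ a ih =>
      intro s h
      apply ih s
      apply hSA (s + a * A)
      rw [show s + a * A + A = s + (a + 1) * A by ring]
      exact h
  have hdescB : ∀ (b s : ℕ), u (s + b * B) = 1 → u s = 1 := by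
    intro b
    induction b with
    | zero => intro s h; simpa using h
    | succ b ih =>
      intro s h
      apply ih s
      apply hSB (s + b * B)
      rw [show s + b * B + B = s + (b + 1) * B by ring]
      exact h
  obtain ⟨C, hC1⟩ : ∃ C, A * B = C := ⟨_, rfl⟩
  obtain ⟨X, hX1, hX2⟩ : ∃ X, (t + C) * p = X ∧ t + C ≤ X :=
    ⟨_, rfl, Nat.le_mul_of_pos_right _ hp⟩
  have hM : A * B ≤ T + X - t := by rw [hC1]; omega
  obtain ⟨xx, yy, hxy⟩ := rep_lemma hB hco hM
  obtain ⟨D, hD⟩ : ∃ D, xx * A + yy * B = D := ⟨_, rfl⟩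
  rw [hD] at hxy
  have hu1 : u (t + xx * A + yy * B) = 1 := by
    rw [show t + xx * A + yy * B = t + (xx * A + yy * B) by ring, hD,
      show t + D = T + (t + C) * p from by rw [hX1]; omega]
    rw [hper (t + C) T]
    exact hT
  exact hdescA xx t (hdescB yy (t + xx * A) hu1)

end FSRaux

/-- Let `0 < k < l < n` and
`f(x_0,...,x_{n-1}) = x_1 x_2 ⋯ x_{n-1} + x_k x_l` over `F_2`.  The functional graph of
the state map of `f` on `F_2^n` has a unique cycle, namely the loop at the all-zero
state (i.e. `0` is a fixed point and every periodic point equals `0`), if and only if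
`gcd(n-k, l-k) = 1`. -/
theorem unique_loop_iff_gcd_one (n k l : ℕ) (hk : 0 < k) (hkl : k < l) (hln : l < n)
    (f : (Fin n → ZMod 2) → ZMod 2)
    (hf : ∀ x : Fin n → ZMod 2,
      f x = (∏ j ∈ Finset.univ.filter (fun j : Fin n => j.val ≠ 0), x j) +
        x ⟨k, by omega⟩ * x ⟨l, by omega⟩) :
    (stateMap n f 0 = 0 ∧
      ∀ x : Fin n → ZMod 2, (∃ p, 0 < p ∧ (stateMap n f)^[p] x = x) → x = 0) ↔
    Nat.gcd (n - k) (l - k) = 1 := by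
  have hn0 : 0 < n := by omega
  have hdi : ∀ a : ZMod 2, a ≠ 1 → a = 0 := by decide
  have h01 : ∀ a : ZMod 2, a ≠ 0 → a = 1 := by decide
  have hfix : stateMap n f 0 = 0 := by
    funext i
    show (if h : i.val + 1 < n then (0 : Fin n → ZMod 2) ⟨i.val + 1, h⟩ else f 0) = 0
    split
    · rfl
    · rw [hf]
      rw [Finset.prod_eq_zero (i := (⟨1, by omega⟩ : Fin n))
        (Finset.mem_filter.mpr ⟨Finset.mem_univ _, by exact (by omega : (1:ℕ) ≠ 0)⟩) rfl]
      simp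
  constructor
  · rintro ⟨-, huniq⟩
    by_contra hne
    set d := Nat.gcd (n - k) (l - k) with hd
    have hdpos : 0 < d := Nat.gcd_pos_of_pos_left _ (by omega)
    have hne' : d ≠ 1 := hne
    have hd2 : 2 ≤ d := by omega
    have hdvdnk : d ∣ n - k := Nat.gcd_dvd_left _ _
    have hdvdlk : d ∣ l - k := Nat.gcd_dvd_right _ _
    have hbr : ∀ t : ℕ, (stateMap n f)^[t] (fun i : Fin n => FSRaux.pulse d i.val)
        = fun i : Fin n => FSRaux.pulse d (t + i.val) := by
      intro t
      induction t with
      | zero =>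
        funext i
        show FSRaux.pulse d i.val = FSRaux.pulse d (0 + i.val)
        rw [Nat.zero_add]
      | succ t ih =>
        rw [Function.iterate_succ_apply', ih]
        funext i
        show (if h : i.val + 1 < n then FSRaux.pulse d (t + (i.val + 1))
          else f (fun i : Fin n => FSRaux.pulse d (t + i.val))) = FSRaux.pulse d (t + 1 + i.val)
        split
        · exact congrArg (FSRaux.pulse d) (by omega)
        · rename_i hsplit
          have hni : i.val + 1 = n := by have := i.isLt; omega
          rw [hf]
          show (∏ j ∈ Finset.univ.filter (fun j : Fin n => j.val ≠ 0),
              FSRaux.pulse d (t + j.val)) + FSRaux.pulse d (t + k) * FSRaux.pulse d (t + l)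
              = FSRaux.pulse d (t + 1 + i.val)
          have hprod : (∏ j ∈ Finset.univ.filter (fun j : Fin n => j.val ≠ 0),
              FSRaux.pulse d (t + j.val)) = 0 := by
            by_cases hd1 : d ∣ t + 1
            · refine Finset.prod_eq_zero (i := (⟨2, by omega⟩ : Fin n))
                (Finset.mem_filter.mpr ⟨Finset.mem_univ _, by exact (by omega : (2:ℕ) ≠ 0)⟩) ?_
              refine FSRaux.pulse_zero fun hdd => ?_
              have h1 := Nat.dvd_sub hdd hd1
              rw [show t + 2 - (t + 1) = 1 by omega] at h1
              exact hne' (Nat.dvd_one.mp h1)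
            · exact Finset.prod_eq_zero (i := (⟨1, by omega⟩ : Fin n))
                (Finset.mem_filter.mpr ⟨Finset.mem_univ _, by exact (by omega : (1:ℕ) ≠ 0)⟩)
                (FSRaux.pulse_zero hd1)
          rw [hprod, zero_add, show t + 1 + i.val = t + n from by omega]
          have ekn : (d ∣ t + n) ↔ (d ∣ t + k) := by
            constructor
            · intro h
              have h1 := Nat.dvd_sub h hdvdnk
              rwa [show t + n - (n - k) = t + k by omega] at h1
            · intro h
              have h1 := Nat.dvd_add h hdvdnk
              rwa [show t + k + (n - k) = t + n by omega] at h1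
          have eln : (d ∣ t + l) ↔ (d ∣ t + k) := by
            constructor
            · intro h
              have h1 := Nat.dvd_sub h hdvdlk
              rwa [show t + l - (l - k) = t + k by omega] at h1
            · intro h
              have h1 := Nat.dvd_add h hdvdlk
              rwa [show t + k + (l - k) = t + l by omega] at h1
          by_cases hdk : d ∣ t + k
          · rw [FSRaux.pulse_one hdk, FSRaux.pulse_one (eln.mpr hdk),
              FSRaux.pulse_one (ekn.mpr hdk)]
            norm_num
          · rw [FSRaux.pulse_zero hdk, FSRaux.pulse_zero (fun h => hdk (eln.mp h)),
              FSRaux.pulse_zero (fun h => hdk (ekn.mp h))]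
            norm_num
    have hper : (stateMap n f)^[d] (fun i : Fin n => FSRaux.pulse d i.val)
        = fun i : Fin n => FSRaux.pulse d i.val := by
      rw [hbr d]
      funext i
      have hiff : d ∣ d + i.val ↔ d ∣ i.val := by
        constructor
        · intro h
          have h1 := Nat.dvd_sub h (dvd_refl d)
          rwa [show d + i.val - d = i.val by omega] at h1
        · intro h
          exact Nat.dvd_add (dvd_refl d) h
      simp only [FSRaux.pulse, hiff]
    have hzero := huniq _ ⟨d, by omega, hper⟩
    have h00 := congrFun hzero ⟨0, by omega⟩
    simp only [FSRaux.pulse, Nat.dvd_zero, if_pos, Pi.zero_apply] at h00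
    exact one_ne_zero h00
  · intro hgcd
    refine ⟨hfix, ?_⟩
    rintro x ⟨p, hp, hxp⟩
    set u : ℕ → ZMod 2 := fun t => (stateMap n f)^[t] x ⟨0, hn0⟩ with hu
    have hper : ∀ t, u (t + p) = u t := by
      intro t
      simp only [hu]
      rw [Function.iterate_add_apply, hxp]
    have hper' : ∀ (m t : ℕ), u (t + m * p) = u t := by
      intro m
      induction m with
      | zero => intro t; simp
      | succ m ih =>
        intro t
        rw [show t + (m + 1) * p = (t + m * p) + p by ring, hper, ih]
    have hrec : ∀ s : ℕ, u (s + n)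
        = (∏ j ∈ Finset.univ.filter (fun j : Fin n => j.val ≠ 0), u (s + j.val))
          + u (s + k) * u (s + l) := by
      intro s
      simp only [hu]
      rw [show s + n = (n - 1) + (s + 1) from by omega, Function.iterate_add_apply,
        FSRaux.iter_zero f hn0 (n - 1) (by omega), Function.iterate_succ_apply',
        FSRaux.stateMap_last f _ (by omega) (by omega), hf]
      congr 1
      · exact Finset.prod_congr rfl fun j _ => FSRaux.iter_window f hn0 x s j
      · congr 1
        · exact FSRaux.iter_window f hn0 x s ⟨k, by omega⟩
        · exact FSRaux.iter_window f hn0 x s ⟨l, by omega⟩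
    have hSA : ∀ s, u (s + (n - k)) = 1 → u s = 1 := by
      intro s hs
      obtain ⟨K, hK, hKk⟩ : ∃ K, k * p = K ∧ k ≤ K :=
        ⟨k * p, rfl, Nat.le_mul_of_pos_right k hp⟩
      have h3 : u ((s + K - k) + n) = 1 := by
        rw [show (s + K - k) + n = (s + (n - k)) + k * p from by rw [hK]; omega, hper' k]
        exact hs
      have h4 := hrec (s + K - k)
      rw [h3] at h4
      have hk1 : u ((s + K - k) + k) = 1 := by
        by_contra hnee
        have h0 : u ((s + K - k) + k) = 0 := hdi _ hnee
        rw [Finset.prod_eq_zero (i := (⟨k, by omega⟩ : Fin n))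
          (Finset.mem_filter.mpr ⟨Finset.mem_univ _, by exact (by omega : k ≠ 0)⟩)
          (by exact h0), h0] at h4
        simp at h4
      rw [show (s + K - k) + k = s + k * p from by rw [hK]; omega, hper' k] at hk1
      exact hk1
    have hSB : ∀ s, u (s + (n - l)) = 1 → u s = 1 := by
      intro s hs
      obtain ⟨K, hK, hKk⟩ : ∃ K, l * p = K ∧ l ≤ K :=
        ⟨l * p, rfl, Nat.le_mul_of_pos_right l hp⟩
      have h3 : u ((s + K - l) + n) = 1 := by
        rw [show (s + K - l) + n = (s + (n - l)) + l * p from by rw [hK]; omega, hper' l]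
        exact hs
      have h4 := hrec (s + K - l)
      rw [h3] at h4
      have hl1 : u ((s + K - l) + l) = 1 := by
        by_contra hnee
        have h0 : u ((s + K - l) + l) = 0 := hdi _ hnee
        rw [Finset.prod_eq_zero (i := (⟨l, by omega⟩ : Fin n))
          (Finset.mem_filter.mpr ⟨Finset.mem_univ _, by exact (by omega : l ≠ 0)⟩)
          (by exact h0), h0, mul_zero] at h4
        simp at h4
      rw [show (s + K - l) + l = s + l * p from by rw [hK]; omega, hper' l] at hl1
      exact hl1
    have hgcdAB : Nat.gcd (n - k) (n - l) = 1 := by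
      have hdvd : Nat.gcd (n - k) (n - l) ∣ 1 := by
        rw [← hgcd]
        refine Nat.dvd_gcd (Nat.gcd_dvd_left _ _) ?_
        have h1 := Nat.gcd_dvd_left (n - k) (n - l)
        have h2 := Nat.gcd_dvd_right (n - k) (n - l)
        have h3 := Nat.dvd_sub h1 h2
        rwa [show (n - k) - (n - l) = l - k by omega] at h3
      exact Nat.dvd_one.mp hdvd
    by_contra hxne
    obtain ⟨i, hi⟩ : ∃ i : Fin n, x i ≠ 0 := by
      by_contra hc
      push_neg at hc
      exact hxne (funext fun i => hc i)
    have hui : u i.val = 1 := by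
      have hw := FSRaux.iter_window f hn0 x 0 i
      simp only [Function.iterate_zero, id_eq, Nat.zero_add] at hw
      simp only [hu]
      rw [← hw]
      exact h01 _ hi
    have hall := fun t => FSRaux.all_one u hp (by omega) hgcdAB hper' hSA hSB hui t
    have hc := hrec 0
    have hprod1 : (∏ j ∈ Finset.univ.filter (fun j : Fin n => j.val ≠ 0),
        u (0 + j.val)) = 1 := Finset.prod_eq_one fun j _ => hall _
    rw [hall (0 + n), hprod1, hall (0 + k), hall (0 + l)] at hc
    exact absurd hc (by decide)
end

section
/- Let 0 < k_1 < k_2 < ... < k_t < n and f(x_0,...,x_{n-1}) = x_1·x_2···x_{n-1} + x_{k_1}·x_{k_2}···x_{k_t}. The functional graph of the state map of f on F_2^n has a unique cycle, the loop at the all-zero state, if and only if gcd(n-k_1, k_2-k_1, ..., k_t-k_1) = 1. -/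
private lemma multiper {Z : ℕ → Prop} {p : ℕ}
    (hper : ∀ a, Z (a + p) ↔ Z a) : ∀ (K a : ℕ), Z (a + p * K) ↔ Z a := by
  intro K
  induction K with
  | zero => intro a; simp
  | succ K ih =>
    intro a
    have e : a + p * (K + 1) = (a + p * K) + p := by ring
    rw [e, hper, ih]

private lemma key_gcd {Z : ℕ → Prop} {p : ℕ} (hp : 0 < p)
    (hper : ∀ a, Z (a + p) ↔ Z a) :
    ∀ a b : ℕ, (∀ m, Z m → Z (m + a)) → (∀ m, Z m → Z (m + b)) →
      ∀ m, Z m → Z (m + Nat.gcd a b) := by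
  -- congruence mod p
  have hmod : ∀ d d' : ℕ, d % p = d' % p → (∀ m, Z m → Z (m + d)) →
      ∀ m, Z m → Z (m + d') := by
    intro d d' h hd m hm
    have hdm := Nat.mod_add_div d p
    have hdm' := Nat.mod_add_div d' p
    have h1 : Z (m + d + p * (d' / p)) := (multiper hper _ _).mpr (hd m hm)
    have e : m + d + p * (d' / p) = (m + d') + p * (d / p) := by omega
    rw [e] at h1
    exact (multiper hper _ _).mp h1
  -- closure under addition
  have hadd : ∀ a b : ℕ, (∀ m, Z m → Z (m + a)) → (∀ m, Z m → Z (m + b)) →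
      ∀ m, Z m → Z (m + (a + b)) := by
    intro a b ha hb m hm
    have := hb _ (ha m hm)
    rwa [add_assoc] at this
  -- closure under multiples
  have hmul : ∀ (c b : ℕ), (∀ m, Z m → Z (m + b)) → ∀ m, Z m → Z (m + c * b) := by
    intro c
    induction c with
    | zero => intro b _ m hm; simpa using hm
    | succ c ih =>
      intro b hb m hm
      have := hadd _ _ (ih b hb) hb m hm
      rwa [show c * b + b = (c+1) * b by ring] at this
  -- closure under truncated subtraction
  have hsub : ∀ a b : ℕ, (∀ m, Z m → Z (m + a)) → (∀ m, Z m → Z (m + b)) →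
      ∀ m, Z m → Z (m + (a - b)) := by
    intro a b ha hb m hm
    by_cases hba : b ≤ a
    · have h1 : ∀ m, Z m → Z (m + (a + (p - 1) * b)) :=
        hadd _ _ ha (hmul (p-1) b hb)
      have hble : b ≤ p * b := Nat.le_mul_of_pos_left b hp
      have e : (a + (p - 1) * b) % p = (a - b) % p := by
        have e2 : a + (p - 1) * b = (a - b) + b * p := by
          rw [Nat.sub_mul, one_mul, mul_comm b p]
          omega
        rw [e2, Nat.add_mul_mod_self_right]
      exact hmod _ _ e h1 m hm
    · have : a - b = 0 := by omega
      rw [this]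
      simpa using hm
  -- Euclid on a bound
  have main : ∀ N a b : ℕ, a + b ≤ N → (∀ m, Z m → Z (m + a)) →
      (∀ m, Z m → Z (m + b)) → ∀ m, Z m → Z (m + Nat.gcd a b) := by
    intro N
    induction N with
    | zero =>
      intro a b hab ha hb m hm
      have h0 : a = 0 ∧ b = 0 := by omega
      rw [h0.1, h0.2]
      simpa using hm
    | succ N ih =>
      intro a b hab ha hb m hm
      rcases Nat.eq_zero_or_pos a with h0 | hapos
      · rw [h0, Nat.gcd_zero_left]; exact hb m hm
      rcases Nat.eq_zero_or_pos b with h0 | hbpos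
      · rw [h0, Nat.gcd_zero_right]; exact ha m hm
      rcases le_total a b with hle | hle
      · rw [← Nat.gcd_sub_self_right hle]
        exact ih a (b - a) (by omega) ha (hsub b a hb ha) m hm
      · rw [Nat.gcd_comm, ← Nat.gcd_sub_self_right hle, Nat.gcd_comm]
        exact ih (a - b) b (by omega) (hsub a b ha hb) hb m hm
  intro a b
  exact main (a + b) a b le_rfl

private lemma key_finset_gcd {Z : ℕ → Prop} {p : ℕ} (hp : 0 < p)
    (hper : ∀ a, Z (a + p) ↔ Z a) {ι : Type*} [DecidableEq ι] (g : ι → ℕ) :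
    ∀ s : Finset ι, (∀ i ∈ s, ∀ m, Z m → Z (m + g i)) →
      ∀ m, Z m → Z (m + s.gcd g) := by
  intro s
  induction s using Finset.induction_on with
  | empty => intro _ m hm; simpa using hm
  | @insert a s ha ih =>
    intro h m hm
    rw [Finset.gcd_insert]
    have e : GCDMonoid.gcd (g a) (s.gcd g) = Nat.gcd (g a) (s.gcd g) := rfl
    rw [e]
    exact key_gcd hp hper _ _ (h a (Finset.mem_insert_self a s))
      (ih (fun i hi => h i (Finset.mem_insert_of_mem hi))) m hm

/-- Let `0 < k_1 < k_2 < ⋯ < k_t < n` and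
`f(x_0,...,x_{n-1}) = x_1 x_2 ⋯ x_{n-1} + x_{k_1} x_{k_2} ⋯ x_{k_t}` over `F_2`.  The
functional graph of the state map of `f` on `F_2^n` has a unique cycle, namely the
loop at the all-zero state, if and only if
`gcd(n - k_1, k_2 - k_1, ..., k_t - k_1) = 1`. -/
theorem unique_loop_iff_gcd_one_general (n t : ℕ) (ht : 0 < t) (k : Fin t → ℕ)
    (hmono : StrictMono k) (hk0 : 0 < k ⟨0, ht⟩) (hkn : ∀ i, k i < n)
    (f : (Fin n → ZMod 2) → ZMod 2)
    (hf : ∀ x : Fin n → ZMod 2,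
      f x = (∏ j ∈ Finset.univ.filter (fun j : Fin n => j.val ≠ 0), x j) +
        ∏ i : Fin t, x ⟨k i, hkn i⟩) :
    (stateMap n f 0 = 0 ∧
      ∀ x : Fin n → ZMod 2, (∃ p, 0 < p ∧ (stateMap n f)^[p] x = x) → x = 0) ↔
    Nat.gcd (n - k ⟨0, ht⟩) (Finset.univ.gcd (fun i : Fin t => k i - k ⟨0, ht⟩)) = 1 := by
  have hkn0 := hkn ⟨0, ht⟩
  have hn2 : 2 ≤ n := by omega
  have hn : 0 < n := by omega
  have hk0le : ∀ i, k ⟨0, ht⟩ ≤ k i := fun i =>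
    hmono.monotone (Fin.le_def.mpr (Nat.zero_le _))
  have hkipos : ∀ i, 0 < k i := fun i => lt_of_lt_of_le hk0 (hk0le i)
  -- the shifting lemma
  have hshift : ∀ (x : Fin n → ZMod 2) (i : ℕ) (hi : i < n) (m : ℕ),
      (stateMap n f)^[m] x ⟨i, hi⟩ = (stateMap n f)^[m + i] x ⟨0, hn⟩ := by
    intro x i
    induction i with
    | zero => intro hi m; rfl
    | succ i ih =>
      intro hi m
      have h2 : (stateMap n f)^[m + 1] x ⟨i, by omega⟩ =
          (stateMap n f)^[m] x ⟨i + 1, hi⟩ := by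
        rw [Function.iterate_succ_apply']
        show (if h : i + 1 < n then (stateMap n f)^[m] x ⟨i + 1, h⟩
          else f ((stateMap n f)^[m] x)) = _
        rw [dif_pos hi]
      rw [← h2, ih (by omega) (m + 1), show m + 1 + i = m + (i + 1) from by omega]
  -- the zero state is fixed (needed in both directions... only LHS)
  have hfix : stateMap n f 0 = 0 := by
    funext i
    show (if h : i.val + 1 < n then (0 : Fin n → ZMod 2) ⟨i.val + 1, h⟩ else f 0) = 0
    split
    · rfl
    · rw [hf]
      have h1 : (∏ j ∈ Finset.univ.filter (fun j : Fin n => j.val ≠ 0),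
          (0 : Fin n → ZMod 2) j) = 0 := by
        apply Finset.prod_eq_zero (i := (⟨1, by omega⟩ : Fin n))
        · simp
        · rfl
      have h2 : (∏ i : Fin t, (0 : Fin n → ZMod 2) ⟨k i, hkn i⟩) = 0 :=
        Finset.prod_eq_zero (Finset.mem_univ ⟨0, ht⟩) rfl
      rw [h1, h2, add_zero]
  constructor
  · -- LHS → gcd = 1 : by contradiction, construct a nonzero periodic state
    intro H
    by_contra hg
    set d := Nat.gcd (n - k ⟨0, ht⟩) (Finset.univ.gcd fun i : Fin t => k i - k ⟨0, ht⟩)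
      with hd
    have hd1 : d ∣ n - k ⟨0, ht⟩ := Nat.gcd_dvd_left _ _
    have hdne : d ≠ 0 := by
      intro h0
      rw [h0] at hd1
      have := Nat.eq_zero_of_zero_dvd hd1
      omega
    have hd2 : 2 ≤ d := by omega
    have hdle : d ≤ n - k ⟨0, ht⟩ := Nat.le_of_dvd (by omega) hd1
    have hdki : ∀ i, d ∣ k i - k ⟨0, ht⟩ := fun i =>
      dvd_trans (Nat.gcd_dvd_right _ _) (Finset.gcd_dvd (Finset.mem_univ i))
    set χ : ℕ → ZMod 2 := fun m => if d ∣ m then 0 else 1 with hχ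
    set x : Fin n → ZMod 2 := fun i => χ i.val with hxdef
    -- the orbit of x
    have hdlt : d < n := by omega
    have hiff0 : ∀ (m : ℕ) (i : Fin t), (d ∣ m + k i ↔ d ∣ m + k ⟨0, ht⟩) := by
      intro m i
      have e : m + k i = (k i - k ⟨0, ht⟩) + (m + k ⟨0, ht⟩) := by
        have := hk0le i; omega
      rw [e]
      exact Nat.dvd_add_right (hdki i)
    have hiffn : ∀ m, (d ∣ m + n ↔ d ∣ m + k ⟨0, ht⟩) := by
      intro m
      have e : m + n = (n - k ⟨0, ht⟩) + (m + k ⟨0, ht⟩) := by omega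
      rw [e]
      exact Nat.dvd_add_right hd1
    have horbit : ∀ m : ℕ, (stateMap n f)^[m] x = fun i => χ (m + i.val) := by
      intro m
      induction m with
      | zero =>
        funext i
        show x i = χ (0 + i.val)
        rw [Nat.zero_add]
      | succ m ih =>
        rw [Function.iterate_succ_apply', ih]
        funext i
        show (if h : i.val + 1 < n then χ (m + (i.val + 1)) else f (fun i => χ (m + i.val)))
          = χ (m + 1 + i.val)
        split
        · rw [show m + (i.val + 1) = m + 1 + i.val from by omega]
        · have hival : i.val = n - 1 := by have := i.isLt; omega
          rw [hf]
          have hA : (∏ j ∈ Finset.univ.filter (fun j : Fin n => j.val ≠ 0),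
              χ (m + j.val)) = 0 := by
            have hmd : m % d < d := Nat.mod_lt m (show 0 < d by omega)
            apply Finset.prod_eq_zero (i := (⟨d - m % d, (Nat.sub_le d (m % d)).trans_lt hdlt⟩ : Fin n))
            · simp only [Finset.mem_filter, Finset.mem_univ, true_and]
              show d - m % d ≠ 0
              omega
            · show χ (m + (d - m % d)) = 0
              rw [hχ]
              simp only
              rw [if_pos]
              have hdvd : d ∣ m - m % d := Nat.dvd_sub_mod m
              have hmd2 : m % d ≤ m := Nat.mod_le m d
              have e : m + (d - m % d) = (m - m % d) + d := by omega
              rw [e]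
              exact dvd_add hdvd dvd_rfl
          have hB : (∏ i : Fin t, χ (m + k i)) = χ (m + k ⟨0, ht⟩) := by
            have hcongr : ∀ i : Fin t, χ (m + k i) = χ (m + k ⟨0, ht⟩) := by
              intro i
              rw [hχ]
              simp only
              by_cases hc : d ∣ m + k ⟨0, ht⟩
              · rw [if_pos ((hiff0 m i).mpr hc), if_pos hc]
              · rw [if_neg (fun hcc => hc ((hiff0 m i).mp hcc)), if_neg hc]
            rw [Finset.prod_congr rfl (fun i _ => hcongr i), Finset.prod_const,
              Finset.card_univ, Fintype.card_fin]
            by_cases hc : d ∣ m + k ⟨0, ht⟩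
            · rw [hχ]; simp only; rw [if_pos hc, zero_pow (by omega)]
            · rw [hχ]; simp only; rw [if_neg hc, one_pow]
          rw [hA, hB, zero_add]
          have e2 : m + 1 + i.val = m + n := by omega
          rw [e2, hχ]
          simp only
          by_cases hc : d ∣ m + k ⟨0, ht⟩
          · rw [if_pos hc, if_pos ((hiffn m).mpr hc)]
          · rw [if_neg hc, if_neg (fun hcc => hc ((hiffn m).mp hcc))]
    have hperiodic : (stateMap n f)^[d] x = x := by
      rw [horbit d]
      funext i
      show χ (d + i.val) = χ i.val
      rw [hχ]
      simp only
      by_cases hc : d ∣ i.val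
      · rw [if_pos (dvd_add dvd_rfl hc), if_pos hc]
      · rw [if_neg (fun hcc => hc ((Nat.dvd_add_right dvd_rfl).mp hcc)), if_neg hc]
    have hx0 : x = 0 := H.2 x ⟨d, by omega, hperiodic⟩
    have hx1 : x ⟨1, by omega⟩ = 1 := by
      show χ 1 = 1
      rw [hχ]
      simp only
      rw [if_neg]
      intro h
      have := Nat.le_of_dvd one_pos h
      omega
    rw [hx0] at hx1
    simp only [Pi.zero_apply] at hx1
    exact absurd hx1 (by decide)
  · -- gcd = 1 → LHS
    intro hgcd
    refine ⟨hfix, ?_⟩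
    rintro x ⟨p, hp, hx⟩
    set s : ℕ → ZMod 2 := fun m => (stateMap n f)^[m] x ⟨0, hn⟩ with hs
    have hper1 : ∀ a, s (a + p) = s a := by
      intro a
      show (stateMap n f)^[a + p] x ⟨0, hn⟩ = _
      rw [Function.iterate_add_apply, hx]
    have hperZ : ∀ a, (s (a + p) = 0) ↔ (s a = 0) := fun a => by rw [hper1]
    have hrec : ∀ m, s (m + n) =
        (∏ j ∈ Finset.univ.filter (fun j : Fin n => j.val ≠ 0), s (m + j.val)) +
          ∏ i : Fin t, s (m + k i) := by
      intro m
      have e1 : s (m + n) = (stateMap n f)^[m + 1] x ⟨n - 1, by omega⟩ := by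
        rw [hshift x (n - 1) (by omega) (m + 1),
          show m + 1 + (n - 1) = m + n from by omega]
      rw [e1, Function.iterate_succ_apply']
      show (if h : (n - 1) + 1 < n then (stateMap n f)^[m] x ⟨(n-1) + 1, h⟩
        else f ((stateMap n f)^[m] x)) = _
      rw [dif_neg (by omega), hf]
      congr 1
      · apply Finset.prod_congr rfl
        intro j _
        have := hshift x j.val j.isLt m
        rwa [Fin.eta] at this
      · apply Finset.prod_congr rfl
        intro i _
        exact hshift x (k i) (hkn i) m
    -- there is a zero somewhere
    have hzero : ∃ m, s m = 0 := by
      by_contra h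
      push_neg at h
      have h1 : ∀ m, s m = 1 := by
        intro m
        have hv : ∀ v : ZMod 2, v ≠ 0 → v = 1 := by decide
        exact hv _ (h m)
      have h2 := hrec 0
      simp only [h1, Finset.prod_const_one] at h2
      exact absurd h2 (by decide)
    -- closure of zeros under adding n - k i
    have hclose : ∀ (i : Fin t) (m : ℕ), s m = 0 → s (m + (n - k i)) = 0 := by
      intro i m hm
      have hK : ∀ a, s (a + p * k i) = 0 ↔ s a = 0 :=
        fun a => multiper (Z := fun a => s a = 0) hperZ (k i) a
      have hqge : k i ≤ p * k i := Nat.le_mul_of_pos_left _ hp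
      generalize hq : p * k i = q at hK hqge
      have hkin := hkn i
      have hkip := hkipos i
      have h2 : s ((m + q - k i) + k i) = 0 := by
        rw [show (m + q - k i) + k i = m + q from by omega]
        exact (hK m).mpr hm
      have h3 := hrec (m + q - k i)
      have hA : (∏ j ∈ Finset.univ.filter (fun j : Fin n => j.val ≠ 0),
          s ((m + q - k i) + j.val)) = 0 := by
        apply Finset.prod_eq_zero (i := (⟨k i, hkn i⟩ : Fin n))
        · simp only [Finset.mem_filter, Finset.mem_univ, true_and]
          show k i ≠ 0
          omega
        · exact h2
      have hB : (∏ j : Fin t, s ((m + q - k i) + k j)) = 0 :=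
        Finset.prod_eq_zero (Finset.mem_univ i) h2
      rw [hA, hB, add_zero] at h3
      exact (hK (m + (n - k i))).mp
        (by rw [show m + (n - k i) + q = (m + q - k i) + n from by omega]; exact h3)
    -- the gcd of the family n - k i equals 1
    have hG1 : Finset.univ.gcd (fun i : Fin t => n - k i) = 1 := by
      have hdvd : Finset.univ.gcd (fun i : Fin t => n - k i) ∣ 1 := by
        rw [← hgcd]
        apply Nat.dvd_gcd
        · exact Finset.gcd_dvd (Finset.mem_univ (⟨0, ht⟩ : Fin t))
        · apply Finset.dvd_gcd
          intro i _
          have h1 : Finset.univ.gcd (fun i : Fin t => n - k i) ∣ n - k ⟨0, ht⟩ :=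
            Finset.gcd_dvd (Finset.mem_univ (⟨0, ht⟩ : Fin t))
          have h2 : Finset.univ.gcd (fun i : Fin t => n - k i) ∣ n - k i :=
            Finset.gcd_dvd (Finset.mem_univ i)
          have e : k i - k ⟨0, ht⟩ = (n - k ⟨0, ht⟩) - (n - k i) := by
            have := hkn i; have := hk0le i; omega
          rw [e]
          exact Nat.dvd_sub h1 h2
      exact Nat.dvd_one.mp hdvd
    -- zeros propagate by one step
    have hT1 : ∀ m, s m = 0 → s (m + 1) = 0 := by
      have hkey := key_finset_gcd (Z := fun m => s m = 0) hp hperZ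
        (fun i : Fin t => n - k i) Finset.univ (fun i _ m hm => hclose i m hm)
      rwa [hG1] at hkey
    obtain ⟨m₀, hm₀⟩ := hzero
    have hall : ∀ j : ℕ, s (m₀ + j) = 0 := by
      intro j
      induction j with
      | zero => exact hm₀
      | succ j ih => exact hT1 _ ih
    have hallm : ∀ r, s r = 0 := by
      intro r
      have hK : ∀ a, s (a + p * m₀) = 0 ↔ s a = 0 :=
        fun a => multiper (Z := fun a => s a = 0) hperZ m₀ a
      have hge : m₀ ≤ p * m₀ := Nat.le_mul_of_pos_left _ hp
      generalize hq : p * m₀ = q at hK hge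
      have h5 := hall (r + q - m₀)
      rw [show m₀ + (r + q - m₀) = r + q from by omega] at h5
      exact (hK r).mp h5
    funext i
    have hxi := hshift x i.val i.isLt 0
    rw [Fin.eta] at hxi
    show x i = 0
    calc x i = (stateMap n f)^[0 + i.val] x ⟨0, hn⟩ := hxi
    _ = 0 := hallm (0 + i.val)
end
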